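/- arXiv:0910.3482 — 3 statements merged into one kernel-verified Lean document; each statement's English description precedes it below -/
import Mathlib

section
/- Let α₁, α₂ be distinct irrational numbers whose continued fraction expansions have bounded partial quotients, and let A be the MCRS-group with eigenlines y = α₁x, y = α₂x. Then there exist positive constants C₁, C₂ such that for every positive integer N, the best rational approximation A_N of A of size at most N satisfies C₁/N² < ρ(A, A_N) < C₂/N². -/
/-- Coefficients (at `x²`, `xy`, `y²`) of the Markoff-Davenport form of the
MCRS-group whose eigenlines are spanned by `(p₁,q₁)` and `(p₂,q₂)`:
`Φ(x,y) = (q₁x - p₁y)(q₂x - p₂y)/(p₁q₂ - p₂q₁)`. -/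
noncomputable def mdCoeffs (p₁ q₁ p₂ q₂ : ℝ) : ℝ × ℝ × ℝ :=
  (q₁ * q₂ / (p₁ * q₂ - p₂ * q₁),
   -(q₁ * p₂ + q₂ * p₁) / (p₁ * q₂ - p₂ * q₁),
   p₁ * p₂ / (p₁ * q₂ - p₂ * q₁))

/-- Discrepancy: minimum over `Φ_A ± Φ_B` of the maximal absolute value
of the coefficients. -/
noncomputable def discrepancy (c d : ℝ × ℝ × ℝ) : ℝ :=
  min (max |c.1 - d.1| (max |c.2.1 - d.2.1| |c.2.2 - d.2.2|))
      (max |c.1 + d.1| (max |c.2.1 + d.2.1| |c.2.2 + d.2.2|))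

/-- A rational MCRS-group of size at most `N`, given by the primitive integer
vectors `v`, `w` spanning its two (distinct) eigenlines; the size is the
maximum of the sup-norms of `v` and `w`. -/
def IsRationalOfSize (N : ℕ) (v w : ℤ × ℤ) : Prop :=
  Int.gcd v.1 v.2 = 1 ∧ Int.gcd w.1 w.2 = 1 ∧
  v.1 * w.2 - w.1 * v.2 ≠ 0 ∧
  max (max v.1.natAbs v.2.natAbs) (max w.1.natAbs w.2.natAbs) ≤ N

/-- The discrepancy between the MCRS-group with eigenlines `y = α₁x`, `y = α₂x`
and the rational MCRS-group spanned by `v` and `w`. -/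
noncomputable def rho (α₁ α₂ : ℝ) (v w : ℤ × ℤ) : ℝ :=
  discrepancy (mdCoeffs 1 α₁ 1 α₂) (mdCoeffs v.1 v.2 w.1 w.2)

/-- `α` has an infinite continued fraction expansion with bounded partial
quotients. -/
def HasBoundedPartialQuotients (α : ℝ) : Prop :=
  ∃ M : ℝ, ∀ (n : ℕ) (b : ℝ), (GenContFract.of α).partDens.get? n = some b → b ≤ M

set_option maxHeartbeats 1000000


open GenContFract

/-- basic structure of the `of` sequence at a non-terminated index -/
lemma cf_step (α : ℝ) {n : ℕ} (ht : ¬(GenContFract.of α).TerminatedAt n) :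
    ∃ b : ℝ, (GenContFract.of α).partDens.get? n = some b ∧
      (GenContFract.of α).s.get? n = some ⟨1, b⟩ ∧ 1 ≤ b ∧ ∃ z : ℤ, b = (z : ℝ) := by
  obtain ⟨gp, hgp⟩ : ∃ gp, (GenContFract.of α).s.get? n = some gp :=
    Option.ne_none_iff_exists'.1 ht
  have ha : gp.a = 1 := of_partNum_eq_one (partNum_eq_s_a hgp)
  have hpd : (GenContFract.of α).partDens.get? n = some gp.b := partDen_eq_s_b hgp
  refine ⟨gp.b, hpd, ?_, of_one_le_get?_partDen hpd, exists_int_eq_of_partDen hpd⟩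
  have : gp = ⟨1, gp.b⟩ := by cases gp; simp_all
  rwa [← this]

lemma cf_not_term (α : ℝ) (h : Irrational α) : ∀ n, ¬(GenContFract.of α).TerminatedAt n := by
  intro n hn
  have : (GenContFract.of α).Terminates := ⟨n, hn⟩
  rw [GenContFract.terminates_iff_rat] at this
  obtain ⟨q, hq⟩ := this
  exact h ⟨q, hq.symm⟩

lemma cf_den_one_le (α : ℝ) (n : ℕ) (ht : ∀ k, ¬(GenContFract.of α).TerminatedAt k) :
    1 ≤ (GenContFract.of α).dens n := by
  have h := GenContFract.succ_nth_fib_le_of_nth_den (v := α) (n := n) (Or.inr (ht _))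
  have : (1 : ℝ) ≤ (Nat.fib (n+1) : ℝ) := by
    exact_mod_cast Nat.fib_pos.2 n.succ_pos
  linarith

lemma cf_den_succ_le (α M : ℝ) (ht : ∀ k, ¬(GenContFract.of α).TerminatedAt k)
    (hb : ∀ (n : ℕ) (b : ℝ), (GenContFract.of α).partDens.get? n = some b → b ≤ M)
    (n : ℕ) : (GenContFract.of α).dens (n+1) ≤ (M+1) * (GenContFract.of α).dens n := by
  have hd0 : (0:ℝ) ≤ (GenContFract.of α).dens n := GenContFract.zero_le_of_den
  cases n with
  | zero =>
    obtain ⟨b, hpd, hs, hb1, _⟩ := cf_step α (ht 0)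
    have h1 : (GenContFract.of α).dens 1 = b := GenContFract.first_den_eq hs
    have h0 : (GenContFract.of α).dens 0 = 1 := GenContFract.zeroth_den_eq_one
    rw [h1, h0]
    have := hb 0 b hpd
    linarith
  | succ n =>
    obtain ⟨b, hpd, hs, hb1, _⟩ := cf_step α (ht (n+1))
    have hrec : (GenContFract.of α).dens (n+2) = b * (GenContFract.of α).dens (n+1)
        + 1 * (GenContFract.of α).dens n :=
      GenContFract.dens_recurrence hs rfl rfl
    have hmono : (GenContFract.of α).dens n ≤ (GenContFract.of α).dens (n+1) :=
      GenContFract.of_den_mono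
    have hbM := hb (n+1) b hpd
    have hd1 : (0:ℝ) ≤ (GenContFract.of α).dens (n+1) := GenContFract.zero_le_of_den
    rw [hrec]
    nlinarith

lemma cf_den_ge (α : ℝ) (ht : ∀ k, ¬(GenContFract.of α).TerminatedAt k) :
    ∀ n : ℕ, (n : ℝ) ≤ (GenContFract.of α).dens n := by
  intro n
  induction n using Nat.twoStepInduction with
  | zero => simp [GenContFract.zeroth_den_eq_one]
  | one => simpa using cf_den_one_le α 1 ht
  | more n ih ih1 =>
    obtain ⟨b, hpd, hs, hb1, _⟩ := cf_step α (ht (n+1))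
    have hrec : (GenContFract.of α).dens (n+2) = b * (GenContFract.of α).dens (n+1)
        + 1 * (GenContFract.of α).dens n :=
      GenContFract.dens_recurrence hs rfl rfl
    have h1 : 1 ≤ (GenContFract.of α).dens (n+1) := cf_den_one_le α (n+1) ht
    have h2 : 1 ≤ (GenContFract.of α).dens n := cf_den_one_le α n ht
    have hmono : (GenContFract.of α).dens n ≤ (GenContFract.of α).dens (n+1) :=
      GenContFract.of_den_mono
    have hd1 : (0:ℝ) ≤ (GenContFract.of α).dens (n+1) := GenContFract.zero_le_of_den
    rw [hrec]
    push_cast at ih1 ⊢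
    nlinarith

lemma cf_int_conts (α : ℝ) (ht : ∀ k, ¬(GenContFract.of α).TerminatedAt k) :
    ∀ n : ℕ, ∃ p q : ℤ, (GenContFract.of α).nums n = (p : ℝ) ∧
      (GenContFract.of α).dens n = (q : ℝ) := by
  intro n
  induction n using Nat.twoStepInduction with
  | zero =>
    exact ⟨⌊α⌋, 1, by simp [GenContFract.zeroth_num_eq_h, GenContFract.of_h_eq_floor],
      by simp [GenContFract.zeroth_den_eq_one]⟩
  | one =>
    obtain ⟨b, hpd, hs, hb1, z, hz⟩ := cf_step α (ht 0)
    refine ⟨z * ⌊α⌋ + 1, z, ?_, ?_⟩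
    · rw [GenContFract.first_num_eq hs]
      push_cast
      simp [hz, GenContFract.of_h_eq_floor]
    · rw [GenContFract.first_den_eq hs, hz]
  | more n ih ih1 =>
    obtain ⟨b, hpd, hs, hb1, z, hz⟩ := cf_step α (ht (n+1))
    obtain ⟨p, q, hp, hq⟩ := ih
    obtain ⟨p', q', hp', hq'⟩ := ih1
    refine ⟨z * p' + p, z * q' + q, ?_, ?_⟩
    · rw [GenContFract.nums_recurrence hs hp hp', hz]
      push_cast; ring
    · rw [GenContFract.dens_recurrence hs hq hq', hz]
      push_cast; ring

lemma cf_coprime (α : ℝ) (ht : ∀ k, ¬(GenContFract.of α).TerminatedAt k)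
    (n : ℕ) {p q p' q' : ℤ}
    (hp : (GenContFract.of α).nums n = (p : ℝ)) (hq : (GenContFract.of α).dens n = (q : ℝ))
    (hp' : (GenContFract.of α).nums (n+1) = (p' : ℝ))
    (hq' : (GenContFract.of α).dens (n+1) = (q' : ℝ)) :
    Int.gcd q p = 1 ∧ p * q' - q * p' = (-1)^(n+1) := by
  have hdet := SimpContFract.determinant (s := SimpContFract.of α) (n := n) (ht n)
  have hdet' : ((p * q' - q * p' : ℤ) : ℝ) = (((-1)^(n+1) : ℤ) : ℝ) := by
    push_cast
    rw [← hp, ← hq, ← hp', ← hq']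
    exact_mod_cast hdet
  have hdetZ : p * q' - q * p' = (-1)^(n+1) := by exact_mod_cast hdet'
  constructor
  · have h1 : (Int.gcd q p : ℤ) ∣ p * q' - q * p' :=
      dvd_sub ((Int.gcd_dvd_right _ _).mul_right q') ((Int.gcd_dvd_left _ _).mul_right p')
    rw [hdetZ] at h1
    have h2 : (Int.gcd q p : ℤ) ∣ 1 := by
      rcases Nat.even_or_odd (n+1) with he | ho
      · rwa [he.neg_one_pow] at h1
      · rw [ho.neg_one_pow] at h1; exact (dvd_neg).1 h1
    exact Nat.eq_one_of_dvd_one (Int.ofNat_dvd.1 (by exact_mod_cast h2))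
  · exact hdetZ

lemma cf_window (α X : ℝ) (ht : ∀ k, ¬(GenContFract.of α).TerminatedAt k) (hX : 1 ≤ X) :
    ∃ n, (GenContFract.of α).dens n ≤ X ∧ X < (GenContFract.of α).dens (n+1) := by
  classical
  have hex : ∃ n, X < (GenContFract.of α).dens n := by
    refine ⟨⌊X⌋₊ + 1, lt_of_lt_of_le (Nat.lt_floor_add_one X) ?_⟩
    have := cf_den_ge α ht (⌊X⌋₊ + 1)
    push_cast at this ⊢
    linarith
  have h0 : ¬ X < (GenContFract.of α).dens 0 := by
    rw [GenContFract.zeroth_den_eq_one]; linarith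
  let k := Nat.find hex
  have hk : X < (GenContFract.of α).dens k := Nat.find_spec hex
  have hkne : k ≠ 0 := by
    intro h
    rw [h] at hk
    exact h0 hk
  obtain ⟨n, hn⟩ := Nat.exists_eq_succ_of_ne_zero hkne
  have hn1 : ¬ X < (GenContFract.of α).dens n := Nat.find_min hex (by omega)
  rw [hn] at hk
  exact ⟨n, not_lt.1 hn1, hk⟩

lemma cf_M_ge_one (α M : ℝ) (ht : ∀ k, ¬(GenContFract.of α).TerminatedAt k)
    (hb : ∀ (n : ℕ) (b : ℝ), (GenContFract.of α).partDens.get? n = some b → b ≤ M) :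
    1 ≤ M := by
  obtain ⟨b, hpd, _, hb1, _⟩ := cf_step α (ht 0)
  exact le_trans hb1 (hb 0 b hpd)

lemma cf_good_approx (α M : ℝ) (hi : Irrational α)
    (hb : ∀ (n : ℕ) (b : ℝ), (GenContFract.of α).partDens.get? n = some b → b ≤ M)
    (X : ℝ) (hX : 1 ≤ X) :
    ∃ p q : ℤ, 1 ≤ q ∧ Int.gcd q p = 1 ∧ (q : ℝ) ≤ X ∧ X < (M+1) * (q : ℝ) ∧
      |α - (p : ℝ)/(q : ℝ)| ≤ 1/((q : ℝ) * X) := by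
  have ht := cf_not_term α hi
  obtain ⟨n, hn1, hn2⟩ := cf_window α X ht hX
  obtain ⟨p, q, hp, hq⟩ := cf_int_conts α ht n
  obtain ⟨p', q', hp', hq'⟩ := cf_int_conts α ht (n+1)
  obtain ⟨hgcd, -⟩ := cf_coprime α ht n hp hq hp' hq'
  have hq1 : (1 : ℝ) ≤ (q : ℝ) := by rw [← hq]; exact cf_den_one_le α n ht
  have hqX : (q : ℝ) ≤ X := by rw [← hq]; exact hn1
  have hsucc := cf_den_succ_le α M ht hb n
  refine ⟨p, q, by exact_mod_cast hq1, hgcd, hqX, ?_, ?_⟩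
  · calc X < (GenContFract.of α).dens (n+1) := hn2
      _ ≤ (M+1) * (GenContFract.of α).dens n := hsucc
      _ = (M+1) * (q : ℝ) := by rw [hq]
  · have habs := GenContFract.abs_sub_convs_le (v := α) (n := n) (ht n)
    rw [GenContFract.conv_eq_num_div_den, hp, hq] at habs
    have hd1pos : (0 : ℝ) < (GenContFract.of α).dens (n+1) := lt_of_lt_of_le (by linarith) (le_of_lt hn2)
    have : 1/((q:ℝ) * (GenContFract.of α).dens (n+1)) ≤ 1/((q:ℝ) * X) := by
      apply one_div_le_one_div_of_le
      · positivity
      · exact mul_le_mul_of_nonneg_left (le_of_lt hn2) (by linarith)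
    exact le_trans habs this

lemma cf_badly (α M : ℝ) (hi : Irrational α)
    (hb : ∀ (n : ℕ) (b : ℝ), (GenContFract.of α).partDens.get? n = some b → b ≤ M) :
    ∀ p q : ℤ, q ≠ 0 → 1/(2*(M+1)^2) ≤ |(q : ℝ)| * |(q : ℝ) * α - (p : ℝ)| := by
  have ht := cf_not_term α hi
  have hM : 1 ≤ M := cf_M_ge_one α M ht hb
  -- reduce to q ≥ 1
  suffices h : ∀ p q : ℤ, 1 ≤ q → 1/(2*(M+1)^2) ≤ |(q : ℝ)| * |(q : ℝ) * α - (p : ℝ)| by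
    intro p q hq
    rcases lt_or_gt_of_ne hq with hneg | hpos
    · have := h (-p) (-q) (by omega)
      push_cast at this
      rw [abs_neg] at this
      convert this using 2
      rw [← abs_neg]
      ring_nf
    · exact h p q hpos
  intro p q hq1
  have hqR : (1 : ℝ) ≤ (q : ℝ) := by exact_mod_cast hq1
  have hqpos : (0 : ℝ) < (q : ℝ) := by linarith
  obtain ⟨n, hn1, hn2⟩ := cf_window α (q : ℝ) ht hqR
  obtain ⟨P, Q, hP, hQ⟩ := cf_int_conts α ht (n+2)
  obtain ⟨P', Q', hP', hQ'⟩ := cf_int_conts α ht (n+3)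
  obtain ⟨hgcd, -⟩ := cf_coprime α ht (n+2) hP hQ hP' hQ'
  have hQ1 : (1 : ℝ) ≤ (Q : ℝ) := by rw [← hQ]; exact cf_den_one_le α (n+2) ht
  have hQgt : (q : ℝ) < (Q : ℝ) := by
    rw [← hQ]
    exact lt_of_lt_of_le hn2 GenContFract.of_den_mono
  -- B₃ = dens (n+3) ≥ 2q
  obtain ⟨b, hpd, hs, hb1, -⟩ := cf_step α (ht (n+2))
  have hrec : (GenContFract.of α).dens (n+3) = b * (GenContFract.of α).dens (n+2)
      + 1 * (GenContFract.of α).dens (n+1) := GenContFract.dens_recurrence hs rfl rfl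
  have hB3 : 2 * (q : ℝ) ≤ (GenContFract.of α).dens (n+3) := by
    rw [hrec]
    have h1 : (q : ℝ) ≤ (GenContFract.of α).dens (n+2) := by rw [hQ] at *; linarith
    have h2 : (q : ℝ) ≤ (GenContFract.of α).dens (n+1) := le_of_lt hn2
    have h3 : (0 : ℝ) ≤ (GenContFract.of α).dens (n+2) := GenContFract.zero_le_of_den
    nlinarith
  -- Q ≤ (M+1)² q
  have hQle : (Q : ℝ) ≤ (M+1)^2 * (q : ℝ) := by
    have e1 := cf_den_succ_le α M ht hb (n+1)
    have e2 := cf_den_succ_le α M ht hb n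
    have e3 : (GenContFract.of α).dens n ≤ (q : ℝ) := hn1
    have h3 : (0 : ℝ) ≤ (GenContFract.of α).dens n := GenContFract.zero_le_of_den
    rw [← hQ]
    nlinarith
  -- approximation quality of P/Q
  have habs := GenContFract.abs_sub_convs_le (v := α) (n := n+2) (ht (n+2))
  rw [GenContFract.conv_eq_num_div_den, hP, hQ] at habs
  have hQpos : (0 : ℝ) < (Q : ℝ) := by linarith
  have hB3pos : (0 : ℝ) < (GenContFract.of α).dens (n+3) := by linarith
  -- e := |Qα - P| ≤ 1/(2q)
  have he : |(Q : ℝ) * α - (P : ℝ)| ≤ 1/(2 * (q : ℝ)) := by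
    have : (Q : ℝ) * α - (P : ℝ) = (Q : ℝ) * (α - (P : ℝ)/(Q : ℝ)) := by
      field_simp
    rw [this, abs_mul, abs_of_pos hQpos]
    calc (Q : ℝ) * |α - (P : ℝ)/(Q : ℝ)|
        ≤ (Q : ℝ) * (1/((Q : ℝ) * (GenContFract.of α).dens (n+3))) :=
          mul_le_mul_of_nonneg_left habs (le_of_lt hQpos)
      _ = 1/((GenContFract.of α).dens (n+3)) := by field_simp
      _ ≤ 1/(2 * (q : ℝ)) := by
          apply one_div_le_one_div_of_le
          · positivity
          · exact hB3
  -- the integer p*Q - q*P is nonzero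
  have hne : p * Q - q * P ≠ 0 := by
    intro hzero
    have hdvd : Q ∣ q := by
      have hco : IsCoprime (Q : ℤ) (P : ℤ) := Int.isCoprime_iff_gcd_eq_one.2 hgcd
      have : Q ∣ q * P := ⟨p, by linarith [hzero]⟩
      exact hco.dvd_of_dvd_mul_right this
    have : (Q : ℤ) ≤ q := Int.le_of_dvd (by exact_mod_cast hqpos) hdvd
    have : (Q : ℝ) ≤ (q : ℝ) := by exact_mod_cast this
    linarith
  have hone : (1 : ℝ) ≤ |(p : ℝ) * (Q : ℝ) - (q : ℝ) * (P : ℝ)| := by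
    have : (1 : ℤ) ≤ |p * Q - q * P| := Int.one_le_abs hne
    calc (1 : ℝ) ≤ (|p * Q - q * P| : ℤ) := by exact_mod_cast this
      _ = |(p : ℝ) * (Q : ℝ) - (q : ℝ) * (P : ℝ)| := by push_cast [Int.cast_abs]; ring_nf
  -- triangle inequality: |pQ - qP| ≤ Q * d + q * e
  set d := |(q : ℝ) * α - (p : ℝ)| with hd
  have htri : |(p : ℝ) * (Q : ℝ) - (q : ℝ) * (P : ℝ)|
      ≤ (Q : ℝ) * d + (q : ℝ) * |(Q : ℝ) * α - (P : ℝ)| := by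
    have hiden : (p : ℝ) * (Q : ℝ) - (q : ℝ) * (P : ℝ)
        = (Q : ℝ) * ((p : ℝ) - (q : ℝ) * α) + (q : ℝ) * ((Q : ℝ) * α - (P : ℝ)) := by ring
    rw [hiden]
    calc |(Q : ℝ) * ((p : ℝ) - (q : ℝ) * α) + (q : ℝ) * ((Q : ℝ) * α - (P : ℝ))|
        ≤ |(Q : ℝ) * ((p : ℝ) - (q : ℝ) * α)| + |(q : ℝ) * ((Q : ℝ) * α - (P : ℝ))| :=
          abs_add_le _ _
      _ = (Q : ℝ) * d + (q : ℝ) * |(Q : ℝ) * α - (P : ℝ)| := by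
          rw [abs_mul, abs_mul, abs_of_pos hQpos, abs_of_pos hqpos, hd, ← abs_neg ((p:ℝ) - (q:ℝ)*α)]
          ring_nf
  have hd0 : 0 ≤ d := abs_nonneg _
  have hqe : (q : ℝ) * |(Q : ℝ) * α - (P : ℝ)| ≤ 1/2 := by
    calc (q : ℝ) * |(Q : ℝ) * α - (P : ℝ)| ≤ (q : ℝ) * (1/(2 * (q : ℝ))) :=
        mul_le_mul_of_nonneg_left he (le_of_lt hqpos)
      _ = 1/2 := by
          field_simp
  have hQd : 1/2 ≤ (Q : ℝ) * d := by linarith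
  rw [abs_of_pos hqpos]
  -- conclude
  have hMpos : (0 : ℝ) < (M+1)^2 := by positivity
  rw [div_le_iff₀ (by positivity)]
  nlinarith [mul_le_mul_of_nonneg_right hQle hd0]

lemma intAbs_cast_le {a : ℤ} {N : ℕ} (h : a.natAbs ≤ N) : |(a : ℝ)| ≤ (N : ℝ) := by
  rw [← Int.cast_abs]
  have : |a| ≤ (N : ℤ) := by rw [Int.abs_eq_natAbs]; exact_mod_cast h
  exact_mod_cast this

lemma quad_bound (a b c x y N t : ℝ) (ha : |a| ≤ t) (hb : |b| ≤ t) (hc : |c| ≤ t)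
    (hx : |x| ≤ N) (hy : |y| ≤ N) :
    |a*x^2 + b*(x*y) + c*y^2| ≤ 3*t*N^2 := by
  have h0x : (0:ℝ) ≤ |x| := abs_nonneg _
  have h0y : (0:ℝ) ≤ |y| := abs_nonneg _
  have h1 : |a*x^2| ≤ t*N^2 := by
    rw [abs_mul, abs_pow]
    have := mul_le_mul ha (pow_le_pow_left₀ h0x hx 2) (by positivity) ((abs_nonneg a).trans ha)
    simpa using this
  have h2 : |b*(x*y)| ≤ t*N^2 := by
    rw [abs_mul, abs_mul]
    have hxy : |x| * |y| ≤ N^2 := by nlinarith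
    have := mul_le_mul hb hxy (by positivity) ((abs_nonneg b).trans hb)
    nlinarith
  have h3 : |c*y^2| ≤ t*N^2 := by
    rw [abs_mul, abs_pow]
    have := mul_le_mul hc (pow_le_pow_left₀ h0y hy 2) (by positivity) ((abs_nonneg c).trans hc)
    simpa using this
  calc |a*x^2 + b*(x*y) + c*y^2| ≤ |a*x^2 + b*(x*y)| + |c*y^2| := abs_add_le _ _
    _ ≤ |a*x^2| + |b*(x*y)| + |c*y^2| := by linarith [abs_add_le (a*x^2) (b*(x*y))]
    _ ≤ 3*t*N^2 := by linarith

lemma rho_lower (α₁ α₂ c : ℝ) (hc : 0 < c)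
    (h1 : ∀ p q : ℤ, q ≠ 0 → c ≤ |(q : ℝ)| * |(q : ℝ) * α₁ - (p : ℝ)|)
    (h2 : ∀ p q : ℤ, q ≠ 0 → c ≤ |(q : ℝ)| * |(q : ℝ) * α₂ - (p : ℝ)|)
    (hne : α₁ ≠ α₂) (N : ℕ) (hN : 1 ≤ N) (v w : ℤ × ℤ)
    (hvw : IsRationalOfSize N v w) :
    min (c * |α₁ - α₂| / 2) 1 / (|α₁ - α₂| * (3 * (N : ℝ)^2)) ≤ rho α₁ α₂ v w := by
  obtain ⟨hgcdv, -, -, hsize⟩ := hvw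
  set g := |α₁ - α₂| with hgdef
  have hg : 0 < g := abs_pos.2 (sub_ne_zero.2 hne)
  set m := min (c * g / 2) 1 with hmdef
  have hm : 0 < m := lt_min (by positivity) one_pos
  set x := ((v.1 : ℝ)) with hxdef
  set y := ((v.2 : ℝ)) with hydef
  have hNR : (1:ℝ) ≤ (N:ℝ) := by exact_mod_cast hN
  have hx : |x| ≤ (N:ℝ) := intAbs_cast_le (le_trans (le_max_left _ _) (le_trans (le_max_left _ _) hsize))
  have hy : |y| ≤ (N:ℝ) := intAbs_cast_le (le_trans (le_max_right _ _) (le_trans (le_max_left _ _) hsize))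
  -- product lower bound
  have hE : m ≤ |α₁ * x - y| * |α₂ * x - y| := by
    rcases eq_or_ne v.1 0 with hv0 | hv0
    · have : v.2.natAbs = 1 := by
        have := hgcdv
        rw [hv0] at this
        simpa [Int.gcd] using this
      have hy1 : |y| = 1 := by
        rw [hydef, ← Int.cast_abs]
        rw [Int.abs_eq_natAbs, this]
        norm_num
      have : |α₁ * x - y| = 1 ∧ |α₂ * x - y| = 1 := by
        rw [hxdef, hv0]
        constructor <;> simp [abs_sub_comm, hy1, ← hydef]
      rw [this.1, this.2]
      simpa [hmdef] using min_le_right (c * g / 2) 1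
    · set d₁ := |α₁ * x - y| with hd1def
      set d₂ := |α₂ * x - y| with hd2def
      have hu : (1:ℝ) ≤ |x| := by
        rw [hxdef, ← Int.cast_abs]
        have : (1:ℤ) ≤ |v.1| := Int.one_le_abs hv0
        exact_mod_cast this
      have hupos : (0:ℝ) < |x| := by linarith
      have hcd1 : c ≤ |x| * d₁ := by
        have := h1 v.2 v.1 hv0
        rw [hd1def]
        convert this using 3
        ring
      have hcd2 : c ≤ |x| * d₂ := by
        have := h2 v.2 v.1 hv0
        rw [hd2def]
        convert this using 3
        ring
      have hsum : g * |x| ≤ d₁ + d₂ := by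
        have : (α₁ * x - y) - (α₂ * x - y) = (α₁ - α₂) * x := by ring
        calc g * |x| = |(α₁ - α₂) * x| := by rw [abs_mul]
          _ = |(α₁ * x - y) - (α₂ * x - y)| := by rw [this]
          _ ≤ d₁ + d₂ := abs_sub _ _
      have hd10 : 0 ≤ d₁ := abs_nonneg _
      have hd20 : 0 ≤ d₂ := abs_nonneg _
      have key : c * g / 2 ≤ d₁ * d₂ := by
        nlinarith [mul_nonneg (sub_nonneg.2 hcd1) hd20, mul_nonneg (sub_nonneg.2 hcd2) hd10]
      exact le_trans (min_le_left _ _) key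
  -- evaluation identities
  set F := mdCoeffs 1 α₁ 1 α₂ with hFdef
  set G := mdCoeffs (v.1 : ℝ) (v.2 : ℝ) (w.1 : ℝ) (w.2 : ℝ) with hGdef
  have hevalG : G.1 * x^2 + G.2.1 * (x*y) + G.2.2 * y^2 = 0 := by
    rw [hGdef, hxdef, hydef]
    simp only [mdCoeffs]
    ring
  have hevalF : F.1 * x^2 + F.2.1 * (x*y) + F.2.2 * y^2
      = ((α₁ * x - y) * (α₂ * x - y)) / (α₂ - α₁) := by
    rw [hFdef]
    simp only [mdCoeffs]
    have hne' : (1:ℝ) * α₂ - 1 * α₁ ≠ 0 := by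
      simpa using sub_ne_zero.2 (Ne.symm hne)
    field_simp
    ring
  have hFlow : m / g ≤ |F.1 * x^2 + F.2.1 * (x*y) + F.2.2 * y^2| := by
    rw [hevalF, abs_div, abs_mul]
    have hg2 : |α₂ - α₁| = g := by rw [hgdef, abs_sub_comm]
    rw [hg2]
    gcongr
  -- final combination
  have hrho : rho α₁ α₂ v w = discrepancy F G := by
    rw [rho, hFdef, hGdef]
  have hNpos : (0:ℝ) < 3 * (N:ℝ)^2 := by positivity
  have branch : ∀ a b c' : ℝ, |a| ≤ max |a| (max |b| |c'|) ∧ |b| ≤ max |a| (max |b| |c'|)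
      ∧ |c'| ≤ max |a| (max |b| |c'|) :=
    fun a b c' => ⟨le_max_left _ _, le_trans (le_max_left _ _) (le_max_right _ _),
      le_trans (le_max_right _ _) (le_max_right _ _)⟩
  have key : ∀ s : ℝ, (s = 1 ∨ s = -1) →
      m / (g * (3 * (N:ℝ)^2)) ≤ max |F.1 - s*G.1| (max |F.2.1 - s*G.2.1| |F.2.2 - s*G.2.2|) := by
    intro s hs
    set T := max |F.1 - s*G.1| (max |F.2.1 - s*G.2.1| |F.2.2 - s*G.2.2|) with hT
    obtain ⟨hT1, hT2, hT3⟩ := branch (F.1 - s*G.1) (F.2.1 - s*G.2.1) (F.2.2 - s*G.2.2)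
    have hqb := quad_bound (F.1 - s*G.1) (F.2.1 - s*G.2.1) (F.2.2 - s*G.2.2) x y (N:ℝ) T
      hT1 hT2 hT3 hx hy
    have heq : (F.1 - s*G.1)*x^2 + (F.2.1 - s*G.2.1)*(x*y) + (F.2.2 - s*G.2.2)*y^2
        = (F.1 * x^2 + F.2.1 * (x*y) + F.2.2 * y^2)
          - s * (G.1 * x^2 + G.2.1 * (x*y) + G.2.2 * y^2) := by ring
    rw [heq, hevalG, mul_zero, sub_zero] at hqb
    have h3 : m / g ≤ 3 * T * (N:ℝ)^2 := le_trans hFlow hqb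
    rw [div_le_iff₀ (by positivity)]
    calc m ≤ 3 * T * (N:ℝ)^2 * g := by
          rw [div_le_iff₀ hg] at h3
          linarith
      _ = T * (g * (3 * (N:ℝ)^2)) := by ring
  have k1 := key 1 (Or.inl rfl)
  have k2 := key (-1) (Or.inr rfl)
  simp only [one_mul] at k1
  simp only [neg_one_mul, sub_neg_eq_add] at k2
  rw [hrho, discrepancy]
  exact le_min k1 k2

lemma discrepancy_nonneg (c d : ℝ × ℝ × ℝ) : 0 ≤ discrepancy c d :=
  le_min (le_trans (abs_nonneg _) (le_max_left _ _))
    (le_trans (abs_nonneg _) (le_max_left _ _))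

lemma mdCoeffs_slopes (P₁ Q₁ P₂ Q₂ : ℝ) (h1 : P₁ ≠ 0) (h2 : P₂ ≠ 0)
    (hd : P₁ * Q₂ - P₂ * Q₁ ≠ 0) :
    mdCoeffs P₁ Q₁ P₂ Q₂ = mdCoeffs 1 (Q₁/P₁) 1 (Q₂/P₂) := by
  have hd' : (1:ℝ) * (Q₂/P₂) - 1 * (Q₁/P₁) ≠ 0 := by
    rw [show (1:ℝ)*(Q₂/P₂) - 1*(Q₁/P₁) = (P₁*Q₂ - P₂*Q₁)/(P₁*P₂) by field_simp]
    exact div_ne_zero hd (mul_ne_zero h1 h2)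
  unfold mdCoeffs
  refine Prod.ext ?_ (Prod.ext ?_ ?_) <;>
    · show _ = _
      rw [div_eq_div_iff hd hd']
      field_simp

lemma discrepancy_slopes_le (α₁ α₂ β₁ β₂ ε : ℝ) (hne : α₁ ≠ α₂)
    (h1 : |β₁ - α₁| ≤ ε) (h2 : |β₂ - α₂| ≤ ε)
    (hεg : ε ≤ |α₁ - α₂|/4) (hε1 : ε ≤ 1) :
    discrepancy (mdCoeffs 1 α₁ 1 α₂) (mdCoeffs 1 β₁ 1 β₂) ≤
      (8*(max |α₁| |α₂| + 1)/|α₁ - α₂| + 8*(max |α₁| |α₂| + 1)^2/|α₁ - α₂|^2) * ε := by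
  set g := |α₁ - α₂| with hgdef
  set R := max |α₁| |α₂| + 1 with hRdef
  set K := 8*R/g + 8*R^2/g^2 with hKdef
  have hg : 0 < g := abs_pos.2 (sub_ne_zero.2 hne)
  have hε0 : 0 ≤ ε := le_trans (abs_nonneg _) h1
  have hR1 : 1 ≤ R := by
    have : (0:ℝ) ≤ max |α₁| |α₂| := le_trans (abs_nonneg _) (le_max_left _ _)
    linarith
  have hα₁R : |α₁| ≤ R := by
    have := le_max_left |α₁| |α₂|; linarith
  have hα₂R : |α₂| ≤ R := by
    have := le_max_right |α₁| |α₂|; linarith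
  have hβ₁R : |β₁| ≤ R := by
    have : |β₁| ≤ |α₁| + |β₁ - α₁| := by
      calc |β₁| = |α₁ + (β₁ - α₁)| := by ring_nf
        _ ≤ |α₁| + |β₁ - α₁| := abs_add_le _ _
    have h4 := le_max_left |α₁| |α₂|
    linarith
  have hβ₂R : |β₂| ≤ R := by
    have : |β₂| ≤ |α₂| + |β₂ - α₂| := by
      calc |β₂| = |α₂ + (β₂ - α₂)| := by ring_nf
        _ ≤ |α₂| + |β₂ - α₂| := abs_add_le _ _
    have h4 := le_max_right |α₁| |α₂|
    linarith
  set D := α₂ - α₁ with hDdef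
  set D' := β₂ - β₁ with hD'def
  have hDabs : |D| = g := by rw [hDdef, hgdef, abs_sub_comm]
  have hDD' : |D' - D| ≤ 2*ε := by
    calc |D' - D| = |(β₂ - α₂) - (β₁ - α₁)| := by rw [hD'def, hDdef]; ring_nf
      _ ≤ |β₂ - α₂| + |β₁ - α₁| := abs_sub _ _
      _ ≤ 2*ε := by linarith
  have hD'low : g/2 ≤ |D'| := by
    have : |D| - |D' - D| ≤ |D'| := by
      have := abs_sub_abs_le_abs_sub D' D
      have h5 : |D| ≤ |D'| + |D' - D| := by
        calc |D| = |D' - (D' - D)| := by ring_nf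
          _ ≤ |D'| + |D' - D| := abs_sub _ _
      linarith
    rw [hDabs] at this
    linarith
  have hD'hi : |D'| ≤ 2*g := by
    have : |D'| ≤ |D| + |D' - D| := by
      calc |D'| = |D + (D' - D)| := by ring_nf
        _ ≤ |D| + |D' - D| := abs_add_le _ _
    rw [hDabs] at this
    linarith
  have hDne : D ≠ 0 := by
    intro h; rw [h] at hDabs; simp at hDabs; linarith
  have hD'ne : D' ≠ 0 := by
    intro h
    rw [h] at hD'low
    simp at hD'low
    linarith
  -- master estimate
  have master : ∀ x y : ℝ, |x - y| ≤ 2*R*ε → |y| ≤ 2*R^2 → |x/D - y/D'| ≤ K*ε := by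
    intro x y hxy hy
    have hid : x/D - y/D' = (x*D' - y*D)/(D*D') := by
      field_simp
    rw [hid, abs_div, abs_mul]
    have hnum : |x*D' - y*D| ≤ 2*R*ε*(2*g) + 2*R^2*(2*ε) := by
      have e1 : x*D' - y*D = (x-y)*D' + y*(D'-D) := by ring
      calc |x*D' - y*D| = |(x-y)*D' + y*(D'-D)| := by rw [e1]
        _ ≤ |(x-y)*D'| + |y*(D'-D)| := abs_add_le _ _
        _ = |x - y| * |D'| + |y| * |D' - D| := by rw [abs_mul, abs_mul]
        _ ≤ 2*R*ε*(2*g) + 2*R^2*(2*ε) := by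
            apply add_le_add
            · exact mul_le_mul hxy hD'hi (abs_nonneg _) (by positivity)
            · exact mul_le_mul hy hDD' (abs_nonneg _) (by positivity)
    have hdenle : g*(g/2) ≤ |D| * |D'| := by
      rw [hDabs]
      exact mul_le_mul_of_nonneg_left hD'low (le_of_lt hg)
    calc |x*D' - y*D| / (|D| * |D'|) ≤ (2*R*ε*(2*g) + 2*R^2*(2*ε))/(g*(g/2)) := by
          apply div_le_div₀ (by positivity) hnum (by positivity) hdenle
      _ = K*ε := by rw [hKdef]; field_simp; ring
  -- apply to the three components
  have c1 : |α₁*α₂/D - β₁*β₂/D'| ≤ K*ε := by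
    apply master
    · have e1 : α₁*α₂ - β₁*β₂ = α₁*(α₂ - β₂) + β₂*(α₁ - β₁) := by ring
      calc |α₁*α₂ - β₁*β₂| = |α₁*(α₂ - β₂) + β₂*(α₁ - β₁)| := by rw [e1]
        _ ≤ |α₁*(α₂ - β₂)| + |β₂*(α₁ - β₁)| := abs_add_le _ _
        _ = |α₁| * |α₂ - β₂| + |β₂| * |α₁ - β₁| := by rw [abs_mul, abs_mul]
        _ ≤ R*ε + R*ε := by
            apply add_le_add
            · exact mul_le_mul hα₁R (by rw [abs_sub_comm]; exact h2) (abs_nonneg _) (by linarith)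
            · exact mul_le_mul hβ₂R (by rw [abs_sub_comm]; exact h1) (abs_nonneg _) (by linarith)
        _ = 2*R*ε := by ring
    · calc |β₁*β₂| = |β₁| * |β₂| := abs_mul _ _
        _ ≤ R * R := mul_le_mul hβ₁R hβ₂R (abs_nonneg _) (by linarith)
        _ ≤ 2*R^2 := by nlinarith
  have c2 : |(-(α₁+α₂))/D - (-(β₁+β₂))/D'| ≤ K*ε := by
    apply master
    · calc |(-(α₁+α₂)) - (-(β₁+β₂))| = |(β₁ - α₁) + (β₂ - α₂)| := by ring_nf
        _ ≤ |β₁ - α₁| + |β₂ - α₂| := abs_add_le _ _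
        _ ≤ 2*ε := by linarith
        _ ≤ 2*R*ε := by nlinarith
    · calc |(-(β₁+β₂))| = |β₁+β₂| := abs_neg _
        _ ≤ |β₁| + |β₂| := abs_add_le _ _
        _ ≤ 2*R := by linarith
        _ ≤ 2*R^2 := by nlinarith
  have c3 : |1/D - 1/D'| ≤ K*ε := by
    apply master
    · rw [sub_self, abs_zero]
      exact mul_nonneg (by linarith) hε0
    · rw [abs_one]; nlinarith
  calc discrepancy (mdCoeffs 1 α₁ 1 α₂) (mdCoeffs 1 β₁ 1 β₂)
      ≤ max |(mdCoeffs 1 α₁ 1 α₂).1 - (mdCoeffs 1 β₁ 1 β₂).1|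
          (max |(mdCoeffs 1 α₁ 1 α₂).2.1 - (mdCoeffs 1 β₁ 1 β₂).2.1|
            |(mdCoeffs 1 α₁ 1 α₂).2.2 - (mdCoeffs 1 β₁ 1 β₂).2.2|) := min_le_left _ _
    _ ≤ K*ε := by
        apply max_le
        · simpa only [mdCoeffs, one_mul, mul_one, ← hDdef, ← hD'def] using c1
        · apply max_le
          · simpa only [mdCoeffs, one_mul, mul_one, ← hDdef, ← hD'def] using c2
          · simpa only [mdCoeffs, one_mul, mul_one, ← hDdef, ← hD'def] using c3
    _ = _ := by rw [hKdef]


lemma natAbs_le_cast {a : ℤ} {N : ℕ} (h : |(a : ℝ)| ≤ (N : ℝ)) : a.natAbs ≤ N := by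
  have h1 : ((|a| : ℤ) : ℝ) ≤ ((N : ℤ) : ℝ) := by rw [Int.cast_abs]; exact_mod_cast h
  have h2 : |a| ≤ (N : ℤ) := by exact_mod_cast h1
  rw [Int.abs_eq_natAbs] at h2
  exact_mod_cast h2
/-- Lagrange-type estimate (Theorem `Lag`): for an MCRS-group with eigenlines
of irrational slopes `α₁ ≠ α₂` having bounded partial quotients, the best
rational approximation of size at most `N` has discrepancy of order `1/N²`. -/
theorem lagrange_estimate_hyperbolic (α₁ α₂ : ℝ)
    (h₁ : Irrational α₁) (h₂ : Irrational α₂) (hne : α₁ ≠ α₂)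
    (hb₁ : HasBoundedPartialQuotients α₁) (hb₂ : HasBoundedPartialQuotients α₂) :
    ∃ C₁ C₂ : ℝ, 0 < C₁ ∧ 0 < C₂ ∧
      ∀ N : ℕ, 0 < N → ∀ v w : ℤ × ℤ, IsRationalOfSize N v w →
        (∀ v' w' : ℤ × ℤ, IsRationalOfSize N v' w' →
          rho α₁ α₂ v w ≤ rho α₁ α₂ v' w') →
        C₁ / (N : ℝ) ^ 2 < rho α₁ α₂ v w ∧ rho α₁ α₂ v w < C₂ / (N : ℝ) ^ 2 := by
  classical
  obtain ⟨M₁, hM₁⟩ := hb₁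
  obtain ⟨M₂, hM₂⟩ := hb₂
  set M := max M₁ M₂ with hMdef
  have hbm₁ : ∀ (n : ℕ) (b : ℝ), (GenContFract.of α₁).partDens.get? n = some b → b ≤ M :=
    fun n b h => le_trans (hM₁ n b h) (le_max_left _ _)
  have hbm₂ : ∀ (n : ℕ) (b : ℝ), (GenContFract.of α₂).partDens.get? n = some b → b ≤ M :=
    fun n b h => le_trans (hM₂ n b h) (le_max_right _ _)
  have ht₁ := cf_not_term α₁ h₁
  have hM1 : 1 ≤ M := cf_M_ge_one α₁ M ht₁ hbm₁
  set c := 1/(2*(M+1)^2) with hcdef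
  have hc : 0 < c := by
    rw [hcdef]
    exact div_pos one_pos (by nlinarith)
  have hbad₁ := cf_badly α₁ M h₁ hbm₁
  have hbad₂ := cf_badly α₂ M h₂ hbm₂
  set g := |α₁ - α₂| with hgdef
  have hg : 0 < g := abs_pos.2 (sub_ne_zero.2 hne)
  set m := min (c*g/2) 1 with hmdef
  have hm : 0 < m := by
    have := mul_pos hc hg
    exact lt_min (by linarith) one_pos
  set R := max |α₁| |α₂| + 1 with hRdef
  have hR1 : 1 ≤ R := by
    have : (0:ℝ) ≤ max |α₁| |α₂| := le_trans (abs_nonneg _) (le_max_left _ _)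
    rw [hRdef]; linarith
  set K := 8*R/g + 8*R^2/g^2 with hKdef
  have hK0 : 0 < K := by
    rw [hKdef]
    have h1 : 0 < 8*R/g := div_pos (by linarith) hg
    have h2 : 0 < 8*R^2/g^2 := div_pos (by nlinarith) (by positivity)
    linarith
  set S := R + M + 1 with hSdef
  have hS1 : 1 ≤ S := by rw [hSdef]; linarith
  have hSpos : 0 < S := by linarith
  have h4g : 0 < 4/g := by positivity
  set T := S^2 + (M+1)*S^2*(4/g + 1) with hTdef
  have hT0 : 0 ≤ T := by
    rw [hTdef]
    have : (0:ℝ) ≤ (M+1)*S^2*(4/g+1) := by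
      apply mul_nonneg (mul_nonneg (by linarith) (by positivity)) (by linarith)
    nlinarith
  set ρ₀ := rho α₁ α₂ (1,0) (0,1) with hρdef
  have hρ0 : 0 ≤ ρ₀ := discrepancy_nonneg _ _
  refine ⟨m/(6*g), K*(M+1)*S^2 + ρ₀*T + 1, div_pos hm (by linarith), ?_, ?_⟩
  · have h1 : (0:ℝ) ≤ K*(M+1)*S^2 :=
      mul_nonneg (mul_nonneg hK0.le (by linarith)) (by positivity)
    have h2 : (0:ℝ) ≤ ρ₀*T := mul_nonneg hρ0 hT0
    linarith
  intro N hN v w hvw hmin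
  have hN1R : (1:ℝ) ≤ (N:ℝ) := by exact_mod_cast hN
  have hNpos : (0:ℝ) < (N:ℝ)^2 := by positivity
  constructor
  · -- lower bound
    have hlow := rho_lower α₁ α₂ c hc hbad₁ hbad₂ hne N hN v w hvw
    have heq : m/(g*(3*(N:ℝ)^2)) = 2*((m/(6*g))/(N:ℝ)^2) := by
      field_simp
      ring
    have hpos : 0 < (m/(6*g))/(N:ℝ)^2 := by positivity
    calc (m/(6*g))/(N:ℝ)^2 < 2*((m/(6*g))/(N:ℝ)^2) := by linarith
      _ = m/(g*(3*(N:ℝ)^2)) := heq.symm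
      _ ≤ rho α₁ α₂ v w := hlow
  · -- upper bound
    by_cases hgood : S ≤ (N:ℝ) ∧ (M+1)*S^2/(N:ℝ)^2 ≤ g/4 ∧ (M+1)*S^2/(N:ℝ)^2 ≤ 1
    · obtain ⟨hSN, hε4, hε1⟩ := hgood
      set ε := (M+1)*S^2/(N:ℝ)^2 with hεdef
      have hε0 : 0 < ε := by
        rw [hεdef]
        exact div_pos (mul_pos (by linarith) (by positivity)) hNpos
      set X := (N:ℝ)/S with hXdef
      have hX1 : 1 ≤ X := (le_div_iff₀ hSpos).2 (by linarith)
      have hXpos : 0 < X := by linarith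
      obtain ⟨p₁, q₁, hq₁1, hgcd₁, hq₁X, hXq₁, happ₁⟩ := cf_good_approx α₁ M h₁ hbm₁ X hX1
      obtain ⟨p₂, q₂, hq₂1, hgcd₂, hq₂X, hXq₂, happ₂⟩ := cf_good_approx α₂ M h₂ hbm₂ X hX1
      have hq₁R : (1:ℝ) ≤ (q₁:ℝ) := by exact_mod_cast hq₁1
      have hq₂R : (1:ℝ) ≤ (q₂:ℝ) := by exact_mod_cast hq₂1
      have hq₁ne : (q₁:ℝ) ≠ 0 := by linarith
      have hq₂ne : (q₂:ℝ) ≠ 0 := by linarith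
      have hXkey : ∀ q : ℤ, (1:ℝ) ≤ (q:ℝ) → X < (M+1)*(q:ℝ) → 1/((q:ℝ)*X) ≤ ε := by
        intro q hq hXq
        have hqpos : (0:ℝ) < (q:ℝ) := by linarith
        rw [hεdef, div_le_div_iff₀ (by positivity) hNpos]
        have hc1 : (N:ℝ) = X*S := by rw [hXdef]; field_simp
        have hX2 : X*X ≤ ((M+1)*(q:ℝ))*X := mul_le_mul_of_nonneg_right (le_of_lt hXq) hXpos.le
        calc 1*(N:ℝ)^2 = (X*X)*S^2 := by rw [hc1]; ring
          _ ≤ (((M+1)*(q:ℝ))*X)*S^2 := mul_le_mul_of_nonneg_right hX2 (by positivity)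
          _ = (M+1)*S^2*((q:ℝ)*X) := by ring
      have hXε : 1/((q₁:ℝ)*X) ≤ ε ∧ 1/((q₂:ℝ)*X) ≤ ε :=
        ⟨hXkey q₁ hq₁R hXq₁, hXkey q₂ hq₂R hXq₂⟩
      have hap₁ : |(p₁:ℝ)/(q₁:ℝ) - α₁| ≤ ε := by
        rw [abs_sub_comm]; exact le_trans happ₁ hXε.1
      have hap₂ : |(p₂:ℝ)/(q₂:ℝ) - α₂| ≤ ε := by
        rw [abs_sub_comm]; exact le_trans happ₂ hXε.2
      have hβne : (p₁:ℝ)/(q₁:ℝ) ≠ (p₂:ℝ)/(q₂:ℝ) := by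
        intro h
        have e1 : α₁ - α₂ = -((p₁:ℝ)/(q₁:ℝ) - α₁) + ((p₂:ℝ)/(q₂:ℝ) - α₂) := by
          rw [← h]; ring
        have : g ≤ 2*ε := by
          calc g = |α₁ - α₂| := hgdef
            _ = |(-((p₁:ℝ)/(q₁:ℝ) - α₁)) + ((p₂:ℝ)/(q₂:ℝ) - α₂)| := by rw [← e1]
            _ ≤ |(-((p₁:ℝ)/(q₁:ℝ) - α₁))| + |(p₂:ℝ)/(q₂:ℝ) - α₂| := abs_add_le _ _
            _ ≤ 2*ε := by rw [abs_neg]; linarith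
        linarith
      have hdetR : (q₁:ℝ)*(p₂:ℝ) - (q₂:ℝ)*(p₁:ℝ) ≠ 0 := by
        intro h
        apply hβne
        rw [div_eq_div_iff hq₁ne hq₂ne]
        linarith
      have hdetZ : q₁*p₂ - q₂*p₁ ≠ 0 := by
        intro h
        apply hdetR
        have : ((q₁*p₂ - q₂*p₁ : ℤ) : ℝ) = 0 := by rw [h]; norm_num
        push_cast at this
        linarith
      -- size bounds
      have hXN : X ≤ (N:ℝ) := by
        rw [hXdef]
        calc (N:ℝ)/S ≤ (N:ℝ)/1 := by
              apply div_le_div_of_nonneg_left (by linarith) one_pos hS1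
          _ = (N:ℝ) := by norm_num
      have hβ₁R : |(p₁:ℝ)/(q₁:ℝ)| ≤ R := by
        have : |(p₁:ℝ)/(q₁:ℝ)| ≤ |α₁| + |(p₁:ℝ)/(q₁:ℝ) - α₁| := by
          calc |(p₁:ℝ)/(q₁:ℝ)| = |α₁ + ((p₁:ℝ)/(q₁:ℝ) - α₁)| := by ring_nf
            _ ≤ |α₁| + |(p₁:ℝ)/(q₁:ℝ) - α₁| := abs_add_le _ _
        have h5 := le_max_left |α₁| |α₂|
        rw [hRdef]
        linarith
      have hβ₂R : |(p₂:ℝ)/(q₂:ℝ)| ≤ R := by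
        have : |(p₂:ℝ)/(q₂:ℝ)| ≤ |α₂| + |(p₂:ℝ)/(q₂:ℝ) - α₂| := by
          calc |(p₂:ℝ)/(q₂:ℝ)| = |α₂ + ((p₂:ℝ)/(q₂:ℝ) - α₂)| := by ring_nf
            _ ≤ |α₂| + |(p₂:ℝ)/(q₂:ℝ) - α₂| := abs_add_le _ _
        have h5 := le_max_right |α₁| |α₂|
        rw [hRdef]
        linarith
      have hp₁N : |(p₁:ℝ)| ≤ (N:ℝ) := by
        have e1 : (p₁:ℝ) = ((p₁:ℝ)/(q₁:ℝ)) * (q₁:ℝ) := by field_simp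
        rw [e1, abs_mul, abs_of_pos (by linarith : (0:ℝ) < (q₁:ℝ))]
        calc |(p₁:ℝ)/(q₁:ℝ)| * (q₁:ℝ) ≤ R * X :=
            mul_le_mul hβ₁R hq₁X (by linarith) (by linarith)
          _ ≤ S * X := mul_le_mul_of_nonneg_right (by rw [hSdef]; linarith) hXpos.le
          _ = (N:ℝ) * (S/S) := by rw [hXdef]; ring
          _ = (N:ℝ) := by rw [div_self hSpos.ne']; ring
      have hp₂N : |(p₂:ℝ)| ≤ (N:ℝ) := by
        have e1 : (p₂:ℝ) = ((p₂:ℝ)/(q₂:ℝ)) * (q₂:ℝ) := by field_simp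
        rw [e1, abs_mul, abs_of_pos (by linarith : (0:ℝ) < (q₂:ℝ))]
        calc |(p₂:ℝ)/(q₂:ℝ)| * (q₂:ℝ) ≤ R * X :=
            mul_le_mul hβ₂R hq₂X (by linarith) (by linarith)
          _ ≤ S * X := mul_le_mul_of_nonneg_right (by rw [hSdef]; linarith) hXpos.le
          _ = (N:ℝ) * (S/S) := by rw [hXdef]; ring
          _ = (N:ℝ) := by rw [div_self hSpos.ne']; ring
      have hsize : IsRationalOfSize N (q₁, p₁) (q₂, p₂) := by
        refine ⟨hgcd₁, hgcd₂, hdetZ, ?_⟩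
        have s1 : q₁.natAbs ≤ N := natAbs_le_cast (by rw [abs_of_pos (by linarith)]; linarith)
        have s2 : p₁.natAbs ≤ N := natAbs_le_cast hp₁N
        have s3 : q₂.natAbs ≤ N := natAbs_le_cast (by rw [abs_of_pos (by linarith)]; linarith)
        have s4 : p₂.natAbs ≤ N := natAbs_le_cast hp₂N
        simp only [max_le_iff]
        exact ⟨⟨s1, s2⟩, s3, s4⟩
      -- discrepancy of candidate
      have hrv' : rho α₁ α₂ (q₁, p₁) (q₂, p₂) ≤ K*ε := by
        have e1 : rho α₁ α₂ (q₁, p₁) (q₂, p₂)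
            = discrepancy (mdCoeffs 1 α₁ 1 α₂)
                (mdCoeffs 1 ((p₁:ℝ)/(q₁:ℝ)) 1 ((p₂:ℝ)/(q₂:ℝ))) := by
          rw [rho]
          congr 1
          exact mdCoeffs_slopes (q₁:ℝ) (p₁:ℝ) (q₂:ℝ) (p₂:ℝ) hq₁ne hq₂ne hdetR
        rw [e1]
        have := discrepancy_slopes_le α₁ α₂ ((p₁:ℝ)/(q₁:ℝ)) ((p₂:ℝ)/(q₂:ℝ)) ε hne
          hap₁ hap₂ (by rw [← hgdef]; exact hε4) hε1
        calc discrepancy (mdCoeffs 1 α₁ 1 α₂)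
              (mdCoeffs 1 ((p₁:ℝ)/(q₁:ℝ)) 1 ((p₂:ℝ)/(q₂:ℝ)))
            ≤ (8*(max |α₁| |α₂| + 1)/|α₁ - α₂| + 8*(max |α₁| |α₂| + 1)^2/|α₁ - α₂|^2) * ε :=
              this
          _ = K*ε := by rw [hKdef, hRdef, hgdef]
      have hfin : rho α₁ α₂ v w ≤ K*ε := le_trans (hmin _ _ hsize) hrv'
      have e2 : K*ε = (K*(M+1)*S^2)/(N:ℝ)^2 := by rw [hεdef]; ring
      have e3 : (K*(M+1)*S^2)/(N:ℝ)^2 < (K*(M+1)*S^2 + ρ₀*T + 1)/(N:ℝ)^2 :=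
        (div_lt_div_iff_of_pos_right hNpos).2 (by linarith [mul_nonneg hρ0 hT0])
      calc rho α₁ α₂ v w ≤ (K*(M+1)*S^2)/(N:ℝ)^2 := by rw [← e2]; exact hfin
        _ < (K*(M+1)*S^2 + ρ₀*T + 1)/(N:ℝ)^2 := e3
    · -- fallback case
      have hNT : (N:ℝ)^2 ≤ T := by
        rcases lt_or_ge ((N:ℝ)) S with hx | hx
        · have h5 : (N:ℝ)^2 ≤ S^2 := by nlinarith
          have h6 : (0:ℝ) ≤ (M+1)*S^2*(4/g+1) :=
            mul_nonneg (mul_nonneg (by linarith) (by positivity)) (by linarith)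
          rw [hTdef]; exact le_add_of_le_of_nonneg h5 h6
        · rcases lt_or_ge (g/4) ((M+1)*S^2/(N:ℝ)^2) with hy | hy
          · have hy' : g/4 * (N:ℝ)^2 < (M+1)*S^2 := (lt_div_iff₀ hNpos).1 hy
            have hid : (4/g)*g = 4 := by field_simp
            have h6 : (0:ℝ) ≤ (M+1)*S^2 :=
              mul_nonneg (by linarith) (by positivity)
            rw [hTdef]
            nlinarith [sq_nonneg S]
          · have hz : ¬ ((M+1)*S^2/(N:ℝ)^2 ≤ 1) := fun hz => hgood ⟨hx, hy, hz⟩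
            push_neg at hz
            have h5 : (N:ℝ)^2 < (M+1)*S^2 := by
              rw [lt_div_iff₀ hNpos] at hz
              linarith
            have h6 : (0:ℝ) ≤ (M+1)*S^2*(4/g) :=
              mul_nonneg (mul_nonneg (by linarith) (by positivity)) (by linarith)
            rw [hTdef]
            nlinarith [sq_nonneg S]
      have hsize0 : IsRationalOfSize N (1,0) (0,1) := by
        refine ⟨by simp [Int.gcd], by simp [Int.gcd], by norm_num, ?_⟩
        simp only [max_le_iff]
        norm_num
        omega
      have h0 : rho α₁ α₂ v w ≤ ρ₀ := hmin _ _ hsize0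
      have hfin : ρ₀ < (K*(M+1)*S^2 + ρ₀*T + 1)/(N:ℝ)^2 := by
        rw [lt_div_iff₀ hNpos]
        have h7 : ρ₀*(N:ℝ)^2 ≤ ρ₀*T := mul_le_mul_of_nonneg_left hNT hρ0
        have h8 : (0:ℝ) ≤ K*(M+1)*S^2 :=
          mul_nonneg (mul_nonneg hK0.le (by linarith)) (by positivity)
        linarith
      exact lt_of_le_of_lt h0 hfin
end

section
/- Let α be irrational with continued fraction [a₀; a₁, a₂, …], convergents mₖ/nₖ, and let N be a positive integer with N > a₀. If k is the maximal index with mₖ ≤ N and nₖ ≤ N, then min{ |α - m/n| : |m| ≤ N, |n| ≤ N, n ≠ 0 } ≥ 1/((a_{k+1}+1)²(a_{k+2}+2)) · 1/N². -/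
open GenContFract

namespace MyAux

variable {v : ℝ}

lemma not_term (hirr : Irrational v) (n : ℕ) : ¬(GenContFract.of v).TerminatedAt n := by
  intro h
  have : (GenContFract.of v).Terminates := ⟨n, h⟩
  obtain ⟨q, hq⟩ := (terminates_iff_rat v).mp this
  exact hirr ⟨q, hq.symm⟩

lemma stream_some (hirr : Irrational v) (n : ℕ) :
    ∃ ifp, IntFractPair.stream v n = some ifp ∧ ifp.fr ≠ 0 := by
  have h := not_term hirr n
  rw [of_terminatedAt_n_iff_succ_nth_intFractPair_stream_eq_none] at h
  obtain ⟨ifp_succ, hsucc⟩ := Option.ne_none_iff_exists'.mp h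
  obtain ⟨ifp, h1, h2, -⟩ := IntFractPair.succ_nth_stream_eq_some_iff.mp hsucc
  exact ⟨ifp, h1, h2⟩

lemma den_pos (hirr : Irrational v) (n : ℕ) : 0 < (GenContFract.of v).dens n := by
  have h := succ_nth_fib_le_of_nth_den (v := v) (n := n)
    (Or.inr (not_term hirr (n - 1)))
  have : (0 : ℝ) < Nat.fib (n + 1) := by
    exact_mod_cast Nat.fib_pos.mpr n.succ_pos
  linarith

lemma contsAux_b_mono (n : ℕ) :
    ((GenContFract.of v).contsAux n).b ≤ ((GenContFract.of v).contsAux (n + 1)).b := by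
  cases n with
  | zero => simp [contsAux]
  | succ m =>
    have h1 : (GenContFract.of v).dens m = ((GenContFract.of v).contsAux (m + 1)).b := by
      rw [den_eq_conts_b, nth_cont_eq_succ_nth_contAux]
    have h2 : (GenContFract.of v).dens (m + 1) = ((GenContFract.of v).contsAux (m + 2)).b := by
      rw [den_eq_conts_b, nth_cont_eq_succ_nth_contAux]
    rw [← h1, ← h2]
    exact of_den_mono

/-- `B_{n+1} = b_{n+1} B_n + B_{n-1}` where `b` comes from `partDens.get? n`. -/
lemma den_succ_eq {b : ℝ} (hb : (GenContFract.of v).partDens.get? n = some b) :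
    (GenContFract.of v).dens (n + 1)
      = b * (GenContFract.of v).dens n + ((GenContFract.of v).contsAux n).b := by
  obtain ⟨gp, hgp, hgpb⟩ := exists_s_b_of_partDen hb
  have ha1 : gp.a = 1 := of_partNum_eq_one (partNum_eq_s_a hgp)
  have := contsAux_recurrence (g := GenContFract.of v) hgp rfl rfl
  rw [den_eq_conts_b, nth_cont_eq_succ_nth_contAux, this]
  rw [den_eq_conts_b, nth_cont_eq_succ_nth_contAux]
  simp [ha1, hgpb]

lemma den_succ_le {b : ℝ} (hb : (GenContFract.of v).partDens.get? n = some b) :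
    (GenContFract.of v).dens (n + 1) ≤ (b + 1) * (GenContFract.of v).dens n := by
  rw [den_succ_eq hb]
  have h1 : ((GenContFract.of v).contsAux n).b ≤ ((GenContFract.of v).contsAux (n+1)).b :=
    contsAux_b_mono n
  have h2 : ((GenContFract.of v).contsAux (n+1)).b = (GenContFract.of v).dens n := by
    rw [den_eq_conts_b, nth_cont_eq_succ_nth_contAux]
  nlinarith [h1, h2]

/-- lower bound for `|v - convs n|`. -/
lemma abs_sub_convs_ge (hirr : Irrational v) (n : ℕ) :
    1 / ((GenContFract.of v).dens n *
        ((GenContFract.of v).dens n + (GenContFract.of v).dens (n + 1)))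
      ≤ |v - (GenContFract.of v).convs n| := by
  obtain ⟨ifp, hst, hfr⟩ := stream_some hirr n
  have key := sub_convs_eq hst
  simp only [if_neg hfr] at key
  set B := ((GenContFract.of v).contsAux (n + 1)).b with hB
  set pB := ((GenContFract.of v).contsAux n).b with hpB
  have hBd : (GenContFract.of v).dens n = B := by
    rw [den_eq_conts_b, nth_cont_eq_succ_nth_contAux]
  have hfrpos : 0 < ifp.fr := lt_of_le_of_ne (IntFractPair.nth_stream_fr_nonneg hst) (Ne.symm hfr)
  have hs_eq := get?_of_eq_some_of_get?_intFractPair_stream_fr_ne_zero hst hfr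
  have hpd : (GenContFract.of v).partDens.get? n
      = some ((IntFractPair.of ifp.fr⁻¹).b : ℝ) := by
    simp [GenContFract.partDens, Stream'.Seq.map_get?, hs_eq]
  have hden1 : (GenContFract.of v).dens (n + 1)
      = ((IntFractPair.of ifp.fr⁻¹).b : ℝ) * (GenContFract.of v).dens n + pB :=
    den_succ_eq hpd
  have hfloor : (IntFractPair.of ifp.fr⁻¹).b = ⌊ifp.fr⁻¹⌋ := rfl
  have hinv : ifp.fr⁻¹ < ((IntFractPair.of ifp.fr⁻¹).b : ℝ) + 1 := by
    rw [hfloor]; exact Int.lt_floor_add_one _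
  have hBpos : 0 < B := by rw [← hBd]; exact den_pos hirr n
  have hpBnn : 0 ≤ pB := zero_le_of_contsAux_b
  have habs : |v - (GenContFract.of v).convs n| = 1 / (B * (ifp.fr⁻¹ * B + pB)) := by
    rw [key]
    rw [abs_div, abs_pow, abs_neg, abs_one, one_pow]
    congr 1
    rw [abs_of_pos]
    positivity
  rw [habs, hBd]
  apply one_div_le_one_div_of_le
  · positivity
  · have : ifp.fr⁻¹ * B + pB ≤ B + (GenContFract.of v).dens (n + 1) := by
      rw [hden1, ← hBd]
      nlinarith [hinv, hBpos.le, hBd]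
    nlinarith [hBpos, hpBnn, this]

/-- integrality and coprimality of convergent numerators/denominators -/
lemma contsAux_int (hirr : Irrational v) (n : ℕ) :
    (∃ z : ℤ, ((GenContFract.of v).contsAux n).a = z) ∧
    (∃ z : ℤ, ((GenContFract.of v).contsAux n).b = z) := by
  induction n using Nat.strong_induction_on with
  | _ n ih =>
    match n with
    | 0 => exact ⟨⟨1, by simp [contsAux]⟩, ⟨0, by simp [contsAux]⟩⟩
    | 1 => exact ⟨⟨⌊v⌋, by simp [contsAux, of_h_eq_floor]⟩, ⟨1, by simp [contsAux]⟩⟩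
    | (m + 2) =>
      obtain ⟨ifp, hst, hfr⟩ := stream_some hirr m
      have hs_eq := get?_of_eq_some_of_get?_intFractPair_stream_fr_ne_zero hst hfr
      have hrec := contsAux_recurrence (g := GenContFract.of v) hs_eq rfl rfl
      obtain ⟨⟨pa, hpa⟩, ⟨pb, hpb⟩⟩ := ih (m + 1) (by omega)
      obtain ⟨⟨ppa, hppa⟩, ⟨ppb, hppb⟩⟩ := ih m (by omega)
      rw [hrec]
      constructor
      · exact ⟨(IntFractPair.of ifp.fr⁻¹).b * pa + ppa, by simp [hpa, hppa]⟩
      · exact ⟨(IntFractPair.of ifp.fr⁻¹).b * pb + ppb, by simp [hpb, hppb]⟩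

lemma numden (hirr : Irrational v) (n : ℕ) :
    ∃ (p : ℤ) (d : ℕ), 0 < d ∧ (GenContFract.of v).nums n = (p : ℝ) ∧
      (GenContFract.of v).dens n = (d : ℝ) ∧ Nat.Coprime p.natAbs d := by
  obtain ⟨⟨p, hp⟩, ⟨db, hdb⟩⟩ := contsAux_int hirr (n + 1)
  obtain ⟨⟨p', hp'⟩, ⟨db', hdb'⟩⟩ := contsAux_int hirr (n + 2)
  have hnum : (GenContFract.of v).nums n = (p : ℝ) := by
    rw [num_eq_conts_a, nth_cont_eq_succ_nth_contAux, hp]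
  have hden : (GenContFract.of v).dens n = (db : ℝ) := by
    rw [den_eq_conts_b, nth_cont_eq_succ_nth_contAux, hdb]
  have hnum' : (GenContFract.of v).nums (n+1) = (p' : ℝ) := by
    rw [num_eq_conts_a, nth_cont_eq_succ_nth_contAux, hp']
  have hden' : (GenContFract.of v).dens (n+1) = (db' : ℝ) := by
    rw [den_eq_conts_b, nth_cont_eq_succ_nth_contAux, hdb']
  have hdpos : (0:ℝ) < db := hden ▸ den_pos hirr n
  have hdbpos : 0 < db := by exact_mod_cast hdpos
  have hdet := SimpContFract.determinant (s := SimpContFract.of v) (n := n)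
    (not_term hirr n)
  have hcoe : ((SimpContFract.of v) : GenContFract ℝ) = GenContFract.of v := rfl
  rw [hcoe, hnum, hden, hnum', hden'] at hdet
  have hdetZ : p * db' - db * p' = (-1) ^ (n + 1) := by
    have : ((p * db' - db * p' : ℤ) : ℝ) = (((-1 : ℤ) ^ (n + 1) : ℤ) : ℝ) := by
      push_cast; linarith [hdet]
    exact_mod_cast this
  have hcop : IsCoprime p db := by
    refine ⟨(-1) ^ (n+1) * db', (-1) ^ (n+1) * (-p'), ?_⟩
    have hsq : ((-1 : ℤ) ^ (n+1)) * ((-1 : ℤ) ^ (n+1)) = 1 := by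
      rw [← pow_add, Even.neg_one_pow ⟨n + 1, by ring⟩]
    linear_combination ((-1 : ℤ)^(n+1)) * hdetZ + hsq
  obtain ⟨d, rfl⟩ : ∃ d : ℕ, db = (d : ℤ) := ⟨db.toNat, (Int.toNat_of_nonneg hdbpos.le).symm⟩
  refine ⟨p, d, by exact_mod_cast hdbpos, hnum, by exact_mod_cast hden, ?_⟩
  have h1 := Int.isCoprime_iff_gcd_eq_one.mp hcop
  simpa [Int.gcd, Nat.Coprime] using h1

end MyAux

set_option maxHeartbeats 1600000 in

/-- Lower estimate for approximation by rationals in the square `N × N`: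
if `k` is the maximal index with `mₖ ≤ N` and `nₖ ≤ N` (where `mₖ/nₖ` are the
convergents of the continued fraction `[a₀; a₁, a₂, …]` of the irrational
`α`), then every rational `m/n` with `|m| ≤ N`, `|n| ≤ N` satisfies
`|α - m/n| ≥ 1/((a_{k+1}+1)²(a_{k+2}+2)) · 1/N²`. -/
theorem min_approx_lower_bound (α : ℝ) (hirr : Irrational α)
    (a : ℕ → ℝ)
    (ha : ∀ j : ℕ, (GenContFract.of α).partDens.get? j = some (a (j + 1)))
    (N : ℕ) (hN : 0 < N) (hNa : (⌊α⌋ : ℝ) < N)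
    (k : ℕ)
    (hk : (GenContFract.of α).nums k ≤ N ∧ (GenContFract.of α).dens k ≤ N)
    (hkmax : ∀ j : ℕ, k < j →
      ¬((GenContFract.of α).nums j ≤ N ∧ (GenContFract.of α).dens j ≤ N)) :
    ∀ m n : ℤ, |m| ≤ (N : ℤ) → |n| ≤ (N : ℤ) → n ≠ 0 →
      |α - (m : ℝ) / n| ≥
        1 / ((a (k + 1) + 1) ^ 2 * (a (k + 2) + 2)) * (1 / (N : ℝ) ^ 2) := by
  intro m n hm hn hn0
  have ha1 : (1:ℝ) ≤ a (k+1) := GenContFract.of_one_le_get?_partDen (ha k)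
  have ha2 : (1:ℝ) ≤ a (k+2) := GenContFract.of_one_le_get?_partDen (ha (k+1))
  have hNR : (0:ℝ) < N := by exact_mod_cast hN
  by_contra hcon
  push_neg at hcon
  set R : ℝ := 1 / ((a (k + 1) + 1) ^ 2 * (a (k + 2) + 2)) * (1 / (N : ℝ) ^ 2) with hR
  set q : ℚ := (m : ℚ) / (n : ℚ) with hq
  have hqcast : (q : ℝ) = (m : ℝ) / n := by
    rw [hq, Rat.cast_div, Rat.cast_intCast, Rat.cast_intCast]
  have hqdvd : (q.den : ℤ) ∣ n := by
    rw [hq, ← Rat.divInt_eq_div]; exact Rat.den_dvd m n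
  have hden_le : (q.den : ℤ) ≤ (N : ℤ) :=
    le_trans (Int.le_of_dvd (abs_pos.mpr hn0) (dvd_abs _ _ |>.mpr hqdvd)) hn
  have hnum_le : |q.num| ≤ (N : ℤ) := by
    rcases eq_or_ne m 0 with rfl | hm0
    · simp [hq] <;> omega
    · have hdvd : q.num ∣ m := by
        rw [hq, ← Rat.divInt_eq_div]; exact Rat.num_dvd m hn0
      exact le_trans (Int.le_of_dvd (abs_pos.mpr hm0) ((abs_dvd_abs _ _).mpr hdvd)) hm
  -- R ≤ 1/(2 q.den^2)
  have hqden_pos : (0:ℝ) < q.den := by exact_mod_cast q.pos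
  have hRle : R ≤ 1 / (2 * (q.den : ℝ) ^ 2) := by
    rw [hR, one_div_mul_one_div]
    apply one_div_le_one_div_of_le
    · positivity
    · have h1 : (q.den : ℝ) ≤ N := by exact_mod_cast hden_le
      have h4 : (4:ℝ) ≤ (a (k+1) + 1)^2 := by nlinarith [ha1]
      have h3 : (3:ℝ) ≤ a (k+2) + 2 := by linarith
      have h12 : (12:ℝ) ≤ (a (k+1) + 1)^2 * (a (k+2) + 2) := by nlinarith [h4, h3]
      have hd2 : (q.den:ℝ)^2 ≤ (N:ℝ)^2 := by nlinarith [hqden_pos, h1]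
      nlinarith [h12, hd2, hNR, sq_nonneg ((N:ℝ))]
  have hleg : |α - (q:ℝ)| < 1 / (2 * (q.den : ℝ) ^ 2) := by
    rw [hqcast]; exact lt_of_lt_of_le hcon hRle
  obtain ⟨j, hj⟩ := Real.exists_convs_eq_rat hleg
  obtain ⟨p, d, hdpos, hnump, hdend, hcop⟩ := MyAux.numden hirr j
  have hdpos' : (0:ℤ) < (d:ℤ) := by exact_mod_cast hdpos
  have hconv : ((((p:ℚ)/(d:ℚ)) : ℚ) : ℝ) = (q : ℝ) := by
    push_cast
    rw [← hnump, ← hdend, ← GenContFract.conv_eq_num_div_den, hj]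
  have hqeq : q = ((p:ℚ)/(d:ℚ)) := by exact_mod_cast hconv.symm
  have hqnum : q.num = p := by
    rw [hqeq]; exact Rat.num_div_eq_of_coprime hdpos' (by simpa using hcop)
  have hqden : (q.den : ℤ) = (d : ℤ) := by
    rw [hqeq]; exact Rat.den_div_eq_of_coprime hdpos' (by simpa using hcop)
  -- j ≤ k
  have hjk : j ≤ k := by
    by_contra hlt
    push_neg at hlt
    refine hkmax j hlt ⟨?_, ?_⟩
    · rw [hnump]
      have : p ≤ (N : ℤ) := le_trans (le_abs_self p) (hqnum ▸ hnum_le)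
      exact_mod_cast this
    · rw [hdend]
      have : (d : ℤ) ≤ (N : ℤ) := hqden ▸ hden_le
      exact_mod_cast this
  -- denominator bounds
  have hmono : Monotone (GenContFract.of α).dens :=
    monotone_nat_of_le_succ (fun i => GenContFract.of_den_mono)
  have hdjN : (GenContFract.of α).dens j ≤ N := le_trans (hmono hjk) hk.2
  have hdk1 : (GenContFract.of α).dens (k+1) ≤ (a (k+1) + 1) * (GenContFract.of α).dens k :=
    MyAux.den_succ_le (ha k)
  have hdj1 : (GenContFract.of α).dens (j+1) ≤ (a (k+1) + 1) * N := by
    refine le_trans (hmono (by omega : j + 1 ≤ k + 1)) (le_trans hdk1 ?_)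
    have := hk.2
    nlinarith [ha1, hk.2]
  have hlower := MyAux.abs_sub_convs_ge hirr j
  rw [hj, hqcast] at hlower
  have hdjpos := MyAux.den_pos hirr j
  have hdj1pos := MyAux.den_pos hirr (j+1)
  -- final chain
  have hfinal : R ≤ 1 / ((GenContFract.of α).dens j *
      ((GenContFract.of α).dens j + (GenContFract.of α).dens (j + 1))) := by
    rw [hR, one_div_mul_one_div]
    apply one_div_le_one_div_of_le
    · positivity
    · have step1 : (GenContFract.of α).dens j *
          ((GenContFract.of α).dens j + (GenContFract.of α).dens (j + 1))
          ≤ (N:ℝ) * ((N:ℝ) + (a (k+1) + 1) * N) := by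
        apply mul_le_mul hdjN (add_le_add hdjN hdj1) (by positivity) hNR.le
      have step2 : (N:ℝ) * ((N:ℝ) + (a (k+1) + 1) * N) = (a (k+1) + 2) * (N:ℝ)^2 := by ring
      have step3 : (a (k+1) + 2) * (N:ℝ)^2 ≤ (a (k+1) + 1)^2 * (a (k+2) + 2) * (N:ℝ)^2 := by
        have : a (k+1) + 2 ≤ (a (k+1) + 1)^2 * (a (k+2) + 2) := by nlinarith [ha1, ha2]
        nlinarith [this, sq_nonneg ((N:ℝ))]
      linarith [step1, step2 ▸ step1, step3]
  exact absurd (lt_of_le_of_lt (le_trans hfinal hlower) hcon) (lt_irrefl _)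
end

section
/- For a nonzero real vector (a,b,c) with a ≠ 0, the Markoff-Davenport form of the maximal commutative subgroup A[a,b,c] of GL(3,ℝ) defined by eigenvectors (a,b,c), (0,1,i), (0,1,-i) equals i·( -((b²+c²)/(2a²))x³ + (b/a)x²y + (c/a)x²z - (1/2)xy² - (1/2)xz² ) up to sign. -/
open Complex

/-- The Markoff-Davenport form of the maximal commutative subgroup `A[a,b,c]`
of `GL(3,ℝ)` with eigenvectors `(a,b,c)`, `(0,1,i)`, `(0,1,-i)`: with
`L₁ = x`, `L₂ = -((c+ib)/a)x + iy + z`, `L₃ = ((ib-c)/a)x - iy + z` (the linear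
forms vanishing on the other two eigenlines) and `Δ` the determinant of their
coefficient matrix, `L₁L₂L₃/Δ` equals, up to sign,
`i(-((b²+c²)/(2a²))x³ + (b/a)x²y + (c/a)x²z - ½xy² - ½xz²)`. -/
theorem markoff_davenport_form_simultaneous (a b c : ℝ)
    (habc : (a, b, c) ≠ (0, 0, 0)) (ha : a ≠ 0) :
    (∀ x y z : ℂ,
      x * (-(((c : ℂ) + I * b) / a) * x + I * y + z) *
          (((I * b - (c : ℂ)) / a) * x - I * y + z) /
        (Matrix.det !![(1 : ℂ), 0, 0;
                        -(((c : ℂ) + I * b) / a), I, 1;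
                        ((I * b - (c : ℂ)) / a), -I, 1])
      = I * (-((((b : ℂ) ^ 2 + (c : ℂ) ^ 2) / (2 * (a : ℂ) ^ 2)) * x ^ 3)
          + ((b : ℂ) / a) * x ^ 2 * y + ((c : ℂ) / a) * x ^ 2 * z
          - x * y ^ 2 / 2 - x * z ^ 2 / 2)) ∨
    (∀ x y z : ℂ,
      x * (-(((c : ℂ) + I * b) / a) * x + I * y + z) *
          (((I * b - (c : ℂ)) / a) * x - I * y + z) /
        (Matrix.det !![(1 : ℂ), 0, 0;
                        -(((c : ℂ) + I * b) / a), I, 1;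
                        ((I * b - (c : ℂ)) / a), -I, 1])
      = -(I * (-((((b : ℂ) ^ 2 + (c : ℂ) ^ 2) / (2 * (a : ℂ) ^ 2)) * x ^ 3)
          + ((b : ℂ) / a) * x ^ 2 * y + ((c : ℂ) / a) * x ^ 2 * z
          - x * y ^ 2 / 2 - x * z ^ 2 / 2))) := by
  left
  intro x y z
  have hd : Matrix.det !![(1 : ℂ), 0, 0;
                        -(((c : ℂ) + I * b) / a), I, 1;
                        ((I * b - (c : ℂ)) / a), -I, 1] = 2 * I := by
    rw [Matrix.det_fin_three]
    norm_num [Matrix.vecHead, Matrix.vecTail, Matrix.cons_val_zero, Matrix.cons_val_one, Matrix.cons_val_two]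
    ring
  rw [hd]
  have ha' : (a : ℂ) ≠ 0 := Complex.ofReal_ne_zero.mpr ha
  have hI : (I : ℂ) ≠ 0 := I_ne_zero
  rw [div_eq_iff (by simp [I_ne_zero] : (2:ℂ)*I ≠ 0)]
  field_simp
  ring_nf
  simp only [I_sq]
  field_simp
  ring
end
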